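/- Let G be a word-hyperbolic group with finite generating set A and word metric d on the Cayley graph X = Γ(G,A). Let H, F ≤ G be quasiconvex subgroups such that H ∩ F = {1}. Then (H, F)₁ := sup{(h, f)₁ : h ∈ H, f ∈ F} < ∞, where (h,f)₁ is the Gromov product with respect to the identity element 1. -/

import Mathlib

variable {G : Type*} [Group G]

/-- The set of lengths of words in the alphabet `A ∪ A⁻¹` representing `g`. -/
def wordLengthSet (A : Finset G) (g : G) : Set ℕ :=
  {n | ∃ l : List G, l.length = n ∧ (∀ x ∈ l, x ∈ A ∨ x⁻¹ ∈ A) ∧ l.prod = g}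

/-- The word length of `g` with respect to the generating set `A`. -/
noncomputable def wl (A : Finset G) (g : G) : ℕ :=
  sInf (wordLengthSet A g)

/-- The word metric on `G` (distance between vertices of the Cayley graph `Γ(G,A)`). -/
noncomputable def wdist (A : Finset G) (g h : G) : ℕ :=
  wl A (g⁻¹ * h)

/-- A (discrete) geodesic from `x` to `y` in the Cayley graph `Γ(G,A)`. -/
def IsGeodesic (A : Finset G) (γ : ℕ → G) (x y : G) : Prop :=
  γ 0 = x ∧ γ (wdist A x y) = y ∧
    ∀ i j : ℕ, i ≤ wdist A x y → j ≤ wdist A x y →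
      wdist A (γ i) (γ j) = Nat.dist i j

/-- The Gromov product `(x,y)_z` in the Cayley graph `Γ(G,A)`. -/
noncomputable def gp (A : Finset G) (z x y : G) : ℝ :=
  ((wdist A z x : ℝ) + (wdist A z y : ℝ) - (wdist A x y : ℝ)) / 2

/-- All geodesic triangles in `Γ(G,A)` are `δ`-thin: each side is contained in the
closed `δ`-neighbourhood of the union of the other two sides. -/
def IsThin (A : Finset G) (δ : ℝ) : Prop :=
  ∀ x y z : G, ∀ γ₁ γ₂ γ₃ : ℕ → G,
    IsGeodesic A γ₁ x y → IsGeodesic A γ₂ y z → IsGeodesic A γ₃ x z →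
    ∀ i, i ≤ wdist A x y →
      (∃ j, j ≤ wdist A y z ∧ (wdist A (γ₁ i) (γ₂ j) : ℝ) ≤ δ) ∨
      (∃ j, j ≤ wdist A x z ∧ (wdist A (γ₁ i) (γ₃ j) : ℝ) ≤ δ)

/-- All geodesic triangles in `Γ(G,A)` are `δ`-trim: points on two sides of a triangle
which are equidistant from the common vertex, up to the Gromov product of the two other
vertices at that vertex, are `δ`-close. -/
def TrimCayley (A : Finset G) (δ : ℝ) : Prop :=
  ∀ x y z : G, ∀ γ₁ γ₂ : ℕ → G, IsGeodesic A γ₁ z x → IsGeodesic A γ₂ z y →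
    ∀ i : ℕ, (i : ℝ) ≤ gp A z x y → (wdist A (γ₁ i) (γ₂ i) : ℝ) ≤ δ

/-- `G` is word-hyperbolic: it is finitely generated and for every finite generating
set `A` there is `δ ≥ 0` such that all geodesic triangles in `Γ(G,A)` are `δ`-thin. -/
def WordHyperbolic (G : Type*) [Group G] : Prop :=
  (∃ A : Finset G, Subgroup.closure (A : Set G) = ⊤) ∧
    ∀ A : Finset G, Subgroup.closure (A : Set G) = ⊤ →
      ∃ δ : ℝ, 0 ≤ δ ∧ IsThin A δ

/-- `G` is virtually cyclic (elementary). -/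
def VirtuallyCyclic (G : Type*) [Group G] : Prop :=
  ∃ H : Subgroup G, IsCyclic H ∧ H.FiniteIndex

/-- `H` is a quasiconvex subgroup of `G`: for every finite generating set `A` there is
`ε ≥ 0` such that every geodesic of `Γ(G,A)` with both endpoints in `H` stays in the
`ε`-neighbourhood of `H`. -/
def QCSubgroup (H : Subgroup G) : Prop :=
  ∀ A : Finset G, Subgroup.closure (A : Set G) = ⊤ →
    ∃ ε : ℝ, 0 ≤ ε ∧ ∀ h₁ h₂ : G, h₁ ∈ H → h₂ ∈ H →
      ∀ γ : ℕ → G, IsGeodesic A γ h₁ h₂ →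
        ∀ i, i ≤ wdist A h₁ h₂ → ∃ h ∈ H, (wdist A (γ i) h : ℝ) ≤ ε

/-- `F` is conjugacy separated from `H` in `G`: `g⁻¹Hg ∩ F = 1` for every `g ∈ G`. -/
def ConjSeparated (H F : Subgroup G) : Prop :=
  ∀ g x : G, x ∈ F → g * x * g⁻¹ ∈ H → x = 1

/-! If `h ∈ H` and `f ∈ F` have large Gromov product `(h, f)₁`, then for every `i` with
`i + δ < (h, f)₁` the point at distance `i` from `1` on `[1, h]` is `δ`-close to `[1, f]`
(not to `[h, f]`, whose points are at distance at least `(h, f)₁` from `1`). Quasiconvexity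
turns it into a pair `h' ∈ H`, `f' ∈ F` with `|h'| ≥ i - ε_H` and `d(h', f') ≤ ε_H + δ + ε_F`.
As `H ∩ F = 1`, the map `(h', f') ↦ h'⁻¹ f'` is injective, so there are only finitely many
such pairs; a bound `M` on their `|h'|` gives `i ≤ M + ε_H`, which bounds `(h, f)₁`. -/

def IsQuasiconvexWith (A : Finset G) (H : Subgroup G) (ε : ℝ) : Prop :=
  ∀ h₁ h₂ : G, h₁ ∈ H → h₂ ∈ H → ∀ γ : ℕ → G, IsGeodesic A γ h₁ h₂ →
    ∀ i, i ≤ wdist A h₁ h₂ → ∃ h ∈ H, (wdist A (γ i) h : ℝ) ≤ ε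

section CayleyGraph

variable {A : Finset G}

lemma wl_prod_le_length {l : List G} (hl : ∀ x ∈ l, x ∈ A ∨ x⁻¹ ∈ A) :
    wl A l.prod ≤ l.length :=
  Nat.sInf_le ⟨l, rfl, hl, rfl⟩

lemma exists_list_length_eq_wl (hA : Subgroup.closure (A : Set G) = ⊤) (g : G) :
    ∃ l : List G, l.length = wl A g ∧ (∀ x ∈ l, x ∈ A ∨ x⁻¹ ∈ A) ∧ l.prod = g := by
  suffices (wordLengthSet A g).Nonempty from Nat.sInf_mem this
  have hg : g ∈ Submonoid.closure ((A : Set G) ∪ (A : Set G)⁻¹) := by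
    rw [← Subgroup.closure_toSubmonoid, hA]
    trivial
  obtain ⟨l, hl, rfl⟩ := Submonoid.exists_list_of_mem_closure hg
  exact ⟨l.length, l, rfl, hl, rfl⟩

lemma wl_mul_le (hA : Subgroup.closure (A : Set G) = ⊤) (g h : G) :
    wl A (g * h) ≤ wl A g + wl A h := by
  obtain ⟨l₁, hlen₁, hl₁, rfl⟩ := exists_list_length_eq_wl hA g
  obtain ⟨l₂, hlen₂, hl₂, rfl⟩ := exists_list_length_eq_wl hA h
  rw [← hlen₁, ← hlen₂, ← List.length_append, ← List.prod_append]
  exact wl_prod_le_length fun x hx => (List.mem_append.mp hx).elim (hl₁ x) (hl₂ x)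

lemma wl_inv_le (hA : Subgroup.closure (A : Set G) = ⊤) (g : G) : wl A g⁻¹ ≤ wl A g := by
  obtain ⟨l, hlen, hl, rfl⟩ := exists_list_length_eq_wl hA g
  rw [← hlen, List.prod_inv_reverse, ← List.length_map (f := fun x : G => x⁻¹),
    ← List.length_reverse]
  refine wl_prod_le_length fun x hx => ?_
  obtain ⟨y, hy, rfl⟩ := List.mem_map.mp (List.mem_reverse.mp hx)
  simpa [or_comm] using hl y hy

lemma wl_inv (hA : Subgroup.closure (A : Set G) = ⊤) (g : G) : wl A g⁻¹ = wl A g :=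
  (wl_inv_le hA g).antisymm (by simpa using wl_inv_le hA g⁻¹)

lemma wdist_comm (hA : Subgroup.closure (A : Set G) = ⊤) (x y : G) :
    wdist A x y = wdist A y x := by
  rw [wdist, wdist, ← wl_inv hA, mul_inv_rev, inv_inv]

lemma wdist_triangle (hA : Subgroup.closure (A : Set G) = ⊤) (x y z : G) :
    wdist A x z ≤ wdist A x y + wdist A y z := by
  simpa only [wdist, mul_assoc, mul_inv_cancel_left] using wl_mul_le hA (x⁻¹ * y) (y⁻¹ * z)

lemma wl_prod_eq_length_of_isInfix (hA : Subgroup.closure (A : Set G) = ⊤) {l m : List G}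
    (hl : ∀ x ∈ l, x ∈ A ∨ x⁻¹ ∈ A) (hmin : wl A l.prod = l.length) (hm : m <:+: l) :
    wl A m.prod = m.length := by
  obtain ⟨s, t, rfl⟩ := hm
  have hs := wl_prod_le_length (l := s) fun x hx => hl x (by simp [hx])
  have ht := wl_prod_le_length (l := t) fun x hx => hl x (by simp [hx])
  have hm := wl_prod_le_length (l := m) fun x hx => hl x (by simp [hx])
  have := (wl_mul_le hA _ _).trans (Nat.add_le_add_right (wl_mul_le hA s.prod m.prod) (wl A t.prod))
  simp only [List.prod_append, List.length_append] at hmin hs ht this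
  omega

lemma exists_isGeodesic (hA : Subgroup.closure (A : Set G) = ⊤) (x y : G) :
    ∃ γ : ℕ → G, IsGeodesic A γ x y := by
  obtain ⟨l, hlen, hl, hprod⟩ := exists_list_length_eq_wl hA (x⁻¹ * y)
  have hn : wdist A x y = l.length := hlen.symm
  have hmin : wl A l.prod = l.length := by rw [hprod, hlen]
  have hsub : ∀ i j, i ≤ j → j ≤ l.length →
      wdist A (x * (l.take i).prod) (x * (l.take j).prod) = j - i := by
    intro i j hij hj
    have hsplit : (l.take j).prod = (l.take i).prod * ((l.take j).drop i).prod := by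
      conv_lhs => rw [← List.take_append_drop i (l.take j)]
      rw [List.take_take, min_eq_left hij, List.prod_append]
    have hinfix : (l.take j).drop i <:+: l :=
      (List.drop_suffix i _).isInfix.trans (List.take_prefix j l).isInfix
    rw [wdist, hsplit, mul_inv_rev, mul_assoc, inv_mul_cancel_left, inv_mul_cancel_left,
      wl_prod_eq_length_of_isInfix hA hl hmin hinfix]
    simp [hj]
  refine ⟨fun i => x * (l.take i).prod, by simp, by simp [hn, hprod], fun i j hi hj => ?_⟩
  rw [hn] at hi hj
  rcases le_total i j with hij | hji
  · rw [hsub i j hij hj, Nat.dist_eq_sub_of_le hij]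
  · rw [wdist_comm hA, hsub j i hji hi, Nat.dist_comm, Nat.dist_eq_sub_of_le hji]

lemma finite_setOf_wl_le (hA : Subgroup.closure (A : Set G) = ⊤) (n : ℕ) :
    {g : G | wl A g ≤ n}.Finite := by
  let T : Set G := {x | x ∈ A ∨ x⁻¹ ∈ A}
  have : Finite T := (A.finite_toSet.union (A.finite_toSet.preimage inv_injective.injOn)).to_subtype
  refine ((List.finite_length_le T n).image fun l => (l.map Subtype.val).prod).subset ?_
  intro g hg
  obtain ⟨l, hlen, hl, rfl⟩ := exists_list_length_eq_wl hA g
  lift l to List T using hl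
  exact ⟨l, show l.length ≤ n by rwa [← List.length_map (f := Subtype.val), hlen], rfl⟩

lemma IsGeodesic.wdist_start {γ : ℕ → G} {x y : G} (hγ : IsGeodesic A γ x y) {i : ℕ}
    (hi : i ≤ wdist A x y) : wdist A x (γ i) = i := by
  simpa [hγ.1, Nat.dist_zero_left] using hγ.2.2 0 i (Nat.zero_le _) hi

lemma IsGeodesic.wdist_end {γ : ℕ → G} {x y : G} (hγ : IsGeodesic A γ x y) {i : ℕ}
    (hi : i ≤ wdist A x y) : wdist A (γ i) y = wdist A x y - i := by
  rw [← hγ.2.1, hγ.2.2 i _ hi le_rfl, hγ.2.1, Nat.dist_eq_sub_of_le hi]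

lemma gp_le_wdist (hA : Subgroup.closure (A : Set G) = ⊤) (z x y : G) :
    gp A z x y ≤ wdist A z x := by
  have : (wdist A z y : ℝ) ≤ wdist A z x + wdist A x y := mod_cast wdist_triangle hA z x y
  rw [gp]
  linarith

lemma gp_le_wdist_of_isGeodesic (hA : Subgroup.closure (A : Set G) = ⊤) {γ : ℕ → G}
    {x y : G} (hγ : IsGeodesic A γ x y) (z : G) {j : ℕ} (hj : j ≤ wdist A x y) :
    gp A z x y ≤ wdist A z (γ j) := by
  have hx : (wdist A z x : ℝ) ≤ wdist A z (γ j) + j := by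
    have := wdist_triangle hA z (γ j) x
    rw [wdist_comm hA (γ j), hγ.wdist_start hj] at this
    exact_mod_cast this
  have hy : (wdist A z y : ℝ) ≤ wdist A z (γ j) + (wdist A x y - j) := by
    have := wdist_triangle hA z (γ j) y
    rw [hγ.wdist_end hj] at this
    rw [← Nat.cast_sub hj]
    exact_mod_cast this
  rw [gp]
  linarith

lemma IsThin.exists_close_of_lt_gp (hA : Subgroup.closure (A : Set G) = ⊤) {δ : ℝ}
    (hthin : IsThin A δ) {x y z : G} {γ₁ γ₂ γ₃ : ℕ → G} (hγ₁ : IsGeodesic A γ₁ x y)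
    (hγ₂ : IsGeodesic A γ₂ y z) (hγ₃ : IsGeodesic A γ₃ x z) {i : ℕ} (hixy : i ≤ wdist A x y)
    (hi : i + δ < gp A x y z) : ∃ j ≤ wdist A x z, (wdist A (γ₁ i) (γ₃ j) : ℝ) ≤ δ := by
  refine (hthin x y z γ₁ γ₂ γ₃ hγ₁ hγ₂ hγ₃ i hixy).resolve_left ?_
  rintro ⟨j, hj, hclose⟩
  have hgp := gp_le_wdist_of_isGeodesic hA hγ₂ x hj
  have : (wdist A x (γ₂ j) : ℝ) ≤ wdist A x (γ₁ i) + wdist A (γ₁ i) (γ₂ j) :=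
    mod_cast wdist_triangle hA _ _ _
  rw [hγ₁.wdist_start hixy] at this
  linarith

lemma exists_close_pair_of_lt_gp (hA : Subgroup.closure (A : Set G) = ⊤) {δ εH εF : ℝ}
    (hδ : 0 ≤ δ) (hthin : IsThin A δ) {H F : Subgroup G} (hH : IsQuasiconvexWith A H εH)
    (hF : IsQuasiconvexWith A F εF) {h f : G} (hh : h ∈ H) (hf : f ∈ F) {i : ℕ}
    (hi : i + δ < gp A 1 h f) :
    ∃ h' ∈ H, ∃ f' ∈ F, (wdist A h' f' : ℝ) ≤ εH + δ + εF ∧ (i : ℝ) ≤ wdist A 1 h' + εH := by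
  obtain ⟨γ₁, hγ₁⟩ := exists_isGeodesic hA 1 h
  obtain ⟨γ₂, hγ₂⟩ := exists_isGeodesic hA h f
  obtain ⟨γ₃, hγ₃⟩ := exists_isGeodesic hA 1 f
  have hih : i ≤ wdist A 1 h := by
    have := gp_le_wdist hA 1 h f
    exact_mod_cast (show (i : ℝ) ≤ wdist A 1 h by linarith)
  obtain ⟨j, hj, hclose⟩ := hthin.exists_close_of_lt_gp hA hγ₁ hγ₂ hγ₃ hih hi
  obtain ⟨h', hh', hh'i⟩ := hH 1 h H.one_mem hh γ₁ hγ₁ i hih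
  obtain ⟨f', hf', hf'j⟩ := hF 1 f F.one_mem hf γ₃ hγ₃ j hj
  rw [wdist_comm hA] at hh'i
  refine ⟨h', hh', f', hf', ?_, ?_⟩
  · have h₁ : (wdist A h' f' : ℝ) ≤ wdist A h' (γ₁ i) + wdist A (γ₁ i) f' :=
      mod_cast wdist_triangle hA _ _ _
    have h₂ : (wdist A (γ₁ i) f' : ℝ) ≤ wdist A (γ₁ i) (γ₃ j) + wdist A (γ₃ j) f' :=
      mod_cast wdist_triangle hA _ _ _
    linarith
  · have : (wdist A 1 (γ₁ i) : ℝ) ≤ wdist A 1 h' + wdist A h' (γ₁ i) :=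
      mod_cast wdist_triangle hA _ _ _
    rw [hγ₁.wdist_start hih] at this
    linarith

lemma finite_setOf_wl_mul_le (hA : Subgroup.closure (A : Set G) = ⊤) {H F : Subgroup G}
    (hHF : Disjoint H F) (n : ℕ) : {p : H × F | wl A (p.1 * p.2 : G) ≤ n}.Finite :=
  (finite_setOf_wl_le hA n).preimage (Subgroup.mul_injective_of_disjoint hHF).injOn

lemma exists_wdist_one_le_of_disjoint (hA : Subgroup.closure (A : Set G) = ⊤)
    {H F : Subgroup G} (hHF : Disjoint H F) (r : ℝ) :
    ∃ M : ℕ, ∀ h ∈ H, ∀ f ∈ F, (wdist A h f : ℝ) ≤ r → wdist A 1 h ≤ M := by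
  obtain ⟨M, hM⟩ := ((finite_setOf_wl_mul_le hA hHF ⌈r⌉₊).image fun p => wl A (p.1 : G)).bddAbove
  refine ⟨M, fun h hh f hf hr => ?_⟩
  have hmem : wl A (h⁻¹ * f) ≤ ⌈r⌉₊ := by exact_mod_cast hr.trans (Nat.le_ceil r)
  simpa [wdist, wl_inv hA] using hM ⟨(⟨h⁻¹, H.inv_mem hh⟩, ⟨f, hf⟩), hmem, rfl⟩

end CayleyGraph

/-- **Proposition 4.5.** Let `G` be a word-hyperbolic group with finite generating set
`A` and word metric `d` on `X = Γ(G,A)`. If `H, F ≤ G` are quasiconvex subgroups with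
`H ∩ F = 1`, then `(H,F)₁ = sup{(h,f)₁ : h ∈ H, f ∈ F} < ∞`. -/
theorem setGromov_subgroups_lt_top
    (hG : WordHyperbolic G) (A : Finset G) (hA : Subgroup.closure (A : Set G) = ⊤)
    (H F : Subgroup G) (hH : QCSubgroup H) (hF : QCSubgroup F)
    (hHF : H ⊓ F = ⊥) :
    (⨆ h ∈ (H : Set G), ⨆ f ∈ (F : Set G), ((gp A 1 h f : ℝ) : EReal)) < ⊤ := by
  obtain ⟨δ, hδ, hthin⟩ := hG.2 A hA
  obtain ⟨εH, hεH, hqcH⟩ := hH A hA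
  obtain ⟨εF, -, hqcF⟩ := hF A hA
  obtain ⟨M, hM⟩ := exists_wdist_one_le_of_disjoint hA (disjoint_iff.mpr hHF) (εH + δ + εF)
  refine (iSup₂_le fun h hh => iSup₂_le fun f hf => ?_).trans_lt
    (EReal.coe_lt_top ((M : ℝ) + εH + 1 + δ))
  refine EReal.coe_le_coe_iff.mpr (le_of_not_gt fun hgp => ?_)
  set i := ⌊(M : ℝ) + εH⌋₊ + 1
  have hi_gt : (M : ℝ) + εH < i := by exact_mod_cast Nat.lt_floor_add_one ((M : ℝ) + εH)
  have hi_le : (i : ℝ) ≤ M + εH + 1 := by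
    have := Nat.floor_le (by positivity : 0 ≤ (M : ℝ) + εH)
    push_cast [i]
    linarith
  obtain ⟨h', hh', f', hf', hclose, hfar⟩ :=
    exists_close_pair_of_lt_gp hA hδ hthin hqcH hqcF hh hf (i := i) (by linarith)
  have : (wdist A 1 h' : ℝ) ≤ M := mod_cast hM h' hh' f' hf' hclose
  linarith
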